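/- Suppose Z_i = Γ_{θ*} + ε_i for i = 1,…,n with θ* ∈ ℝ^p and ε₁,…,ε_n symmetric d×d matrices, max_{1 ≤ j ≤ p} ‖B_j‖_F ≤ M₁, and let θ̂ be a minimizer of ℓ^λ. If the deterministic event (1/n) ‖Σ_{i=1}^n ε_i‖₂ ≤ λ / (M₁ u_p n) holds, where u_p = max_{1 ≤ j ≤ p} √(rank(B_j)), then ‖Γ_{θ̂} − Γ_{θ*}‖_F² ≤ 4λ |θ*|₁ / n. -/

import Mathlib

open Matrix MeasureTheory ProbabilityTheory Finset

noncomputable section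

/-- Frobenius inner product `⟨A,B⟩ = tr(Aᵀ B)`. -/
def frobInner {d : ℕ} (A B : Matrix (Fin d) (Fin d) ℝ) : ℝ := Matrix.trace (Aᵀ * B)

/-- Frobenius norm `‖A‖_F = √⟨A,A⟩`. -/
def frobNorm {d : ℕ} (A : Matrix (Fin d) (Fin d) ℝ) : ℝ := Real.sqrt (frobInner A A)

/-- Spectral (operator) norm of a matrix, as the operator norm of the induced
linear map on Euclidean space. -/
def specNorm {d : ℕ} (A : Matrix (Fin d) (Fin d) ℝ) : ℝ :=
  ‖LinearMap.toContinuousLinearMap (Matrix.toEuclideanLin A)‖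

/-- Loewner order: `A ⪯ B` iff `B - A` is positive semidefinite. -/
def loewnerLE {d : ℕ} (A B : Matrix (Fin d) (Fin d) ℝ) : Prop := (B - A).PosSemidef

/-- Entrywise expectation of a random matrix. -/
def matExp {Ω : Type*} [MeasurableSpace Ω] (μ : Measure Ω) {d : ℕ}
    (X : Ω → Matrix (Fin d) (Fin d) ℝ) : Matrix (Fin d) (Fin d) ℝ :=
  Matrix.of fun a c => ∫ ω, X ω a c ∂μ

/-- Linear predictor `Γ_θ = ∑ⱼ θⱼ Bⱼ`. -/
def Gamma {d p : ℕ} (B : Fin p → Matrix (Fin d) (Fin d) ℝ) (θ : Fin p → ℝ) :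
    Matrix (Fin d) (Fin d) ℝ := ∑ j, θ j • B j

/-- Empirical risk `ℓ(θ) = ∑ᵢ ‖Zᵢ - Γ_θ‖_F²`. -/
def empRisk {d p n : ℕ} (B : Fin p → Matrix (Fin d) (Fin d) ℝ)
    (Z : Fin n → Matrix (Fin d) (Fin d) ℝ) (θ : Fin p → ℝ) : ℝ :=
  ∑ i, (frobNorm (Z i - Gamma B θ)) ^ 2

/-- Penalized objective `ℓ^λ(θ) = ℓ(θ) + 2λ ∑ⱼ |θⱼ|`. -/
def objective {d p n : ℕ} (B : Fin p → Matrix (Fin d) (Fin d) ℝ)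
    (Z : Fin n → Matrix (Fin d) (Fin d) ℝ) (lam : ℝ) (θ : Fin p → ℝ) : ℝ :=
  empRisk B Z θ + 2 * lam * ∑ j, |θ j|

/-- Soft-thresholding operator `ST`. -/
def softThresh (a lam : ℝ) : ℝ := if lam < a then a - lam else if a < -lam then a + lam else 0

/-- Measurable space structure on matrices (entrywise, via the Pi structure). -/
instance matrixMeasurableSpace {d : ℕ} : MeasurableSpace (Matrix (Fin d) (Fin d) ℝ) :=
  (inferInstance : MeasurableSpace (Fin d → Fin d → ℝ))

/-!
Minimality of `θ̂` against `θ*` gives the basic inequality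
`n ‖Δ‖_F² ≤ 2 ⟨∑ εᵢ, Δ⟩ + 2λ (|θ*|₁ - |θ̂|₁)` for `Δ = Γ_θ̂ - Γ_θ*`. Expanding `Δ` in the `B_j`, the
cross term is at most `max_j |⟨∑ εᵢ, B_j⟩| · |θ̂ - θ*|₁`, and trace duality bounds
`|⟨E, B⟩| ≤ ‖E‖₂ ∑ |eigenvalues of B| ≤ ‖E‖₂ √(rank B) ‖B‖_F` (diagonalise the symmetric `B` in an
orthonormal eigenbasis, then Cauchy–Schwarz over its nonzero eigenvalues). On the event this
is at most `λ`, and the `|θ̂|₁` terms cancel.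
-/

section Frobenius

variable {d : ℕ}

lemma frobInner_comm (A B : Matrix (Fin d) (Fin d) ℝ) : frobInner A B = frobInner B A := by
  rw [frobInner, frobInner, ← trace_transpose, transpose_mul, transpose_transpose]

lemma frobInner_self_nonneg (A : Matrix (Fin d) (Fin d) ℝ) : 0 ≤ frobInner A A :=
  (posSemidef_conjTranspose_mul_self A).trace_nonneg

lemma frobNorm_sq (A : Matrix (Fin d) (Fin d) ℝ) : frobNorm A ^ 2 = frobInner A A :=
  Real.sq_sqrt (frobInner_self_nonneg A)

lemma frobNorm_nonneg (A : Matrix (Fin d) (Fin d) ℝ) : 0 ≤ frobNorm A := Real.sqrt_nonneg _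

lemma frobNorm_sub_sq (X Y : Matrix (Fin d) (Fin d) ℝ) :
    frobNorm (X - Y) ^ 2 = frobNorm X ^ 2 - 2 * frobInner X Y + frobNorm Y ^ 2 := by
  have hYX := frobInner_comm Y X
  simp only [frobNorm_sq, frobInner, transpose_sub, sub_mul, mul_sub, trace_sub] at hYX ⊢
  linarith

lemma frobInner_sum_left {n : ℕ} (A : Fin n → Matrix (Fin d) (Fin d) ℝ)
    (C : Matrix (Fin d) (Fin d) ℝ) :
    frobInner (∑ i, A i) C = ∑ i, frobInner (A i) C := by
  simp only [frobInner, transpose_sum, Finset.sum_mul, trace_sum]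

lemma frobInner_Gamma {p : ℕ} (E : Matrix (Fin d) (Fin d) ℝ)
    (B : Fin p → Matrix (Fin d) (Fin d) ℝ) (θ : Fin p → ℝ) :
    frobInner E (Gamma B θ) = ∑ j, θ j * frobInner E (B j) := by
  simp only [frobInner, Gamma, Matrix.mul_sum, Matrix.mul_smul, trace_sum, trace_smul, smul_eq_mul]

lemma specNorm_nonneg (A : Matrix (Fin d) (Fin d) ℝ) : 0 ≤ specNorm A := norm_nonneg _

end Frobenius

lemma Gamma_sub {d p : ℕ} (B : Fin p → Matrix (Fin d) (Fin d) ℝ) (θ θ' : Fin p → ℝ) :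
    Gamma B θ - Gamma B θ' = Gamma B (θ - θ') := by
  simp only [Gamma, ← Finset.sum_sub_distrib, ← sub_smul, Pi.sub_apply]

lemma trace_eq_sum_inner_toEuclideanLin {𝕜 ι : Type*} [RCLike 𝕜] [Fintype ι] [DecidableEq ι]
    (M : Matrix ι ι 𝕜) (b : OrthonormalBasis ι 𝕜 (EuclideanSpace 𝕜 ι)) :
    M.trace = ∑ i, inner 𝕜 (b i) (toEuclideanLin M (b i)) := by
  rw [← LinearMap.trace_eq_sum_inner, toEuclideanLin_eq_toLin_orthonormal, trace_toLin_eq]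

lemma toEuclideanLin_eigenvectorBasis {𝕜 ι : Type*} [RCLike 𝕜] [Fintype ι] [DecidableEq ι]
    {B : Matrix ι ι 𝕜} (hB : B.IsHermitian) (i : ι) :
    toEuclideanLin B (hB.eigenvectorBasis i) = hB.eigenvalues i • hB.eigenvectorBasis i :=
  WithLp.ofLp_injective 2 (by simpa [toLpLin_apply] using hB.mulVec_eigenvectorBasis i)

section Spectral

variable {d : ℕ}

lemma frobInner_eq_sum_eigenvalues_mul_inner (A : Matrix (Fin d) (Fin d) ℝ)
    {B : Matrix (Fin d) (Fin d) ℝ} (hB : B.IsHermitian) :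
    frobInner A B = ∑ i, hB.eigenvalues i *
      inner ℝ (hB.eigenvectorBasis i) (toEuclideanLin A (hB.eigenvectorBasis i)) := by
  rw [frobInner_comm, frobInner, (isHermitian_iff_isSymm.mp hB).eq, trace_mul_comm,
    trace_eq_sum_inner_toEuclideanLin _ hB.eigenvectorBasis]
  refine Finset.sum_congr rfl fun i _ => ?_
  rw [toLpLin_mul (q := 2), LinearMap.comp_apply, toEuclideanLin_eigenvectorBasis, map_smul,
    inner_smul_right]

lemma abs_inner_toEuclideanLin_le (A : Matrix (Fin d) (Fin d) ℝ) (x : EuclideanSpace ℝ (Fin d)) :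
    |inner ℝ x (toEuclideanLin A x)| ≤ specNorm A * ‖x‖ ^ 2 :=
  calc _ ≤ ‖x‖ * ‖toEuclideanLin A x‖ := abs_real_inner_le_norm _ _
    _ ≤ ‖x‖ * (specNorm A * ‖x‖) :=
      mul_le_mul_of_nonneg_left ((toEuclideanLin A).toContinuousLinearMap.le_opNorm x)
        (norm_nonneg x)
    _ = specNorm A * ‖x‖ ^ 2 := by ring

lemma frobInner_self_eq_sum_eigenvalues_sq {B : Matrix (Fin d) (Fin d) ℝ} (hB : B.IsHermitian) :
    frobInner B B = ∑ i, hB.eigenvalues i ^ 2 := by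
  rw [frobInner_eq_sum_eigenvalues_mul_inner B hB]
  refine Finset.sum_congr rfl fun i _ => ?_
  rw [toEuclideanLin_eigenvectorBasis, inner_smul_right, real_inner_self_eq_norm_sq,
    hB.eigenvectorBasis.orthonormal.1 i]
  ring

lemma sum_abs_eigenvalues_le_sqrt_rank_mul_frobNorm {B : Matrix (Fin d) (Fin d) ℝ}
    (hB : B.IsHermitian) :
    ∑ i, |hB.eigenvalues i| ≤ Real.sqrt (B.rank : ℝ) * frobNorm B := by
  calc ∑ i, |hB.eigenvalues i|
      = ∑ i, (if hB.eigenvalues i ≠ 0 then 1 else 0) * |hB.eigenvalues i| := by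
        refine Finset.sum_congr rfl fun i _ => ?_
        by_cases h : hB.eigenvalues i = 0 <;> simp [h]
    _ ≤ Real.sqrt (∑ i, (if hB.eigenvalues i ≠ 0 then (1 : ℝ) else 0) ^ 2)
          * Real.sqrt (∑ i, |hB.eigenvalues i| ^ 2) := Real.sum_mul_le_sqrt_mul_sqrt _ _ _
    _ = Real.sqrt (B.rank : ℝ) * frobNorm B := by
        rw [hB.rank_eq_card_non_zero_eigs, Fintype.card_subtype, Finset.card_filter]
        simp only [ite_pow, one_pow, sq_abs, frobNorm, frobInner_self_eq_sum_eigenvalues_sq hB]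
        norm_num

lemma abs_frobInner_le_specNorm_mul_sqrt_rank_mul_frobNorm (A : Matrix (Fin d) (Fin d) ℝ)
    {B : Matrix (Fin d) (Fin d) ℝ} (hB : B.IsHermitian) :
    |frobInner A B| ≤ specNorm A * (Real.sqrt (B.rank : ℝ) * frobNorm B) := by
  rw [frobInner_eq_sum_eigenvalues_mul_inner A hB]
  calc _ ≤ ∑ i, |hB.eigenvalues i| * specNorm A := by
        refine (Finset.abs_sum_le_sum_abs _ _).trans (Finset.sum_le_sum fun i _ => ?_)
        rw [abs_mul]
        refine mul_le_mul_of_nonneg_left ?_ (abs_nonneg _)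
        simpa [hB.eigenvectorBasis.orthonormal.1 i] using
          abs_inner_toEuclideanLin_le A (hB.eigenvectorBasis i)
    _ = specNorm A * ∑ i, |hB.eigenvalues i| := by rw [← Finset.sum_mul, mul_comm]
    _ ≤ specNorm A * (Real.sqrt (B.rank : ℝ) * frobNorm B) :=
        mul_le_mul_of_nonneg_left (sum_abs_eigenvalues_le_sqrt_rank_mul_frobNorm hB)
          (specNorm_nonneg A)

end Spectral

section Lasso

variable {d p n : ℕ} (B : Fin p → Matrix (Fin d) (Fin d) ℝ)

lemma empRisk_eq {ε Z : Fin n → Matrix (Fin d) (Fin d) ℝ} {Γ : Matrix (Fin d) (Fin d) ℝ}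
    (hZ : ∀ i, Z i = Γ + ε i) (θ : Fin p → ℝ) :
    empRisk B Z θ = ∑ i, frobNorm (ε i) ^ 2 - 2 * frobInner (∑ i, ε i) (Gamma B θ - Γ)
      + n * frobNorm (Gamma B θ - Γ) ^ 2 := by
  have hres : ∀ i, Z i - Gamma B θ = ε i - (Gamma B θ - Γ) := fun i => by rw [hZ i]; abel
  simp only [empRisk, hres, frobNorm_sub_sq, Finset.sum_add_distrib, Finset.sum_sub_distrib,
    frobInner_sum_left, Finset.mul_sum, Finset.sum_const, Finset.card_univ, Fintype.card_fin,
    nsmul_eq_mul]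
  ring

lemma frobInner_Gamma_sub_Gamma_le {E : Matrix (Fin d) (Fin d) ℝ} {lam : ℝ}
    (hE : ∀ j, |frobInner E (B j)| ≤ lam) (θ θ' : Fin p → ℝ) :
    frobInner E (Gamma B θ - Gamma B θ') ≤ lam * (∑ j, |θ j| + ∑ j, |θ' j|) := by
  rw [Gamma_sub, frobInner_Gamma, mul_comm, ← Finset.sum_add_distrib, Finset.sum_mul]
  refine Finset.sum_le_sum fun j _ => ?_
  calc (θ - θ') j * frobInner E (B j) ≤ |(θ - θ') j| * |frobInner E (B j)| :=
        (le_abs_self _).trans (abs_mul _ _).le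
    _ ≤ (|θ j| + |θ' j|) * lam :=
        mul_le_mul (abs_sub _ _) (hE j) (abs_nonneg _) (by positivity)

lemma lasso_oracle_inequality {ε Z : Fin n → Matrix (Fin d) (Fin d) ℝ} {θstar θhat : Fin p → ℝ}
    {lam : ℝ} (hZ : ∀ i, Z i = Gamma B θstar + ε i)
    (hθhat : objective B Z lam θhat ≤ objective B Z lam θstar)
    (hnoise : ∀ j, |frobInner (∑ i, ε i) (B j)| ≤ lam) :
    n * frobNorm (Gamma B θhat - Gamma B θstar) ^ 2 ≤ 4 * lam * ∑ j, |θstar j| := by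
  have hcross := frobInner_Gamma_sub_Gamma_le B hnoise θhat θstar
  have hzero : frobInner (∑ i, ε i) 0 = 0 ∧ frobNorm (0 : Matrix (Fin d) (Fin d) ℝ) = 0 := by
    simp [frobNorm, frobInner]
  simp only [objective, empRisk_eq B hZ, sub_self, hzero] at hθhat
  linarith

end Lasso

lemma mul_le_of_one_div_mul_le_div {s c lam n : ℝ} (hc : 0 ≤ c) (hlam : 0 ≤ lam) (hn : 0 < n)
    (h : 1 / n * s ≤ lam / (c * n)) : s * c ≤ lam := by
  rcases hc.eq_or_lt with rfl | hc
  · simpa using hlam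
  rw [div_mul_eq_div_div, one_div_mul_eq_div, div_le_div_iff_of_pos_right hn,
    le_div_iff₀ hc] at h
  exact h

theorem stmt_7_general {d p n : ℕ} (hp : 0 < p) (hn : 0 < n) (M₁ : ℝ)
    (B : Fin p → Matrix (Fin d) (Fin d) ℝ) (hBsymm : ∀ j, (B j)ᵀ = B j)
    (hBF : ∀ j, frobNorm (B j) ≤ M₁)
    (u : ℝ) (hu : u = Finset.univ.sup' (Finset.univ_nonempty_iff.mpr ⟨⟨0, hp⟩⟩)
      (fun j => Real.sqrt ((B j).rank : ℝ)))
    (θstar : Fin p → ℝ)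
    (ε : Fin n → Matrix (Fin d) (Fin d) ℝ)
    (Z : Fin n → Matrix (Fin d) (Fin d) ℝ) (hZ : ∀ i, Z i = Gamma B θstar + ε i)
    (lam : ℝ) (hlam : 0 < lam)
    (θhat : Fin p → ℝ) (hθhat : ∀ θ, objective B Z lam θhat ≤ objective B Z lam θ)
    (hevent : (1 / n : ℝ) * specNorm (∑ i, ε i) ≤ lam / (M₁ * u * n)) :
    frobNorm (Gamma B θhat - Gamma B θstar) ^ 2 ≤ 4 * lam * (∑ j, |θstar j|) / n := by
  have hBh : ∀ j, (B j).IsHermitian := fun j => isHermitian_iff_isSymm.mpr (hBsymm j)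
  have hrank : ∀ j, Real.sqrt ((B j).rank : ℝ) ≤ u := fun j =>
    hu ▸ Finset.le_sup' (fun j => Real.sqrt ((B j).rank : ℝ)) (Finset.mem_univ j)
  have hMu : 0 ≤ M₁ * u := mul_nonneg ((frobNorm_nonneg _).trans (hBF ⟨0, hp⟩))
    ((Real.sqrt_nonneg _).trans (hrank ⟨0, hp⟩))
  have hspec : specNorm (∑ i, ε i) * (M₁ * u) ≤ lam :=
    mul_le_of_one_div_mul_le_div hMu hlam.le (by positivity) hevent
  have hnoise : ∀ j, |frobInner (∑ i, ε i) (B j)| ≤ lam := fun j =>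
    calc |frobInner (∑ i, ε i) (B j)|
        ≤ specNorm (∑ i, ε i) * (Real.sqrt ((B j).rank : ℝ) * frobNorm (B j)) :=
          abs_frobInner_le_specNorm_mul_sqrt_rank_mul_frobNorm _ (hBh j)
      _ ≤ specNorm (∑ i, ε i) * (M₁ * u) := by
          rw [mul_comm M₁]
          exact mul_le_mul_of_nonneg_left (mul_le_mul (hrank j) (hBF j) (frobNorm_nonneg _)
            ((Real.sqrt_nonneg _).trans (hrank j))) (specNorm_nonneg _)
      _ ≤ lam := hspec
  have horacle := lasso_oracle_inequality B hZ (hθhat θstar) hnoise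
  rw [le_div_iff₀ (by positivity)]
  linarith

/-- on the event `(1/n)‖∑ᵢ εᵢ‖₂ ≤ λ/(M₁ u_p n)`, the squared
Frobenius error of the penalized estimator is at most `4λ|θ*|₁/n`. -/
theorem stmt_7 {d p n : ℕ} (hp : 0 < p) (hn : 0 < n) (M₁ : ℝ)
    (B : Fin p → Matrix (Fin d) (Fin d) ℝ) (hBsymm : ∀ j, (B j)ᵀ = B j)
    (hBF : ∀ j, frobNorm (B j) ≤ M₁)
    (u : ℝ) (hu : u = Finset.univ.sup' (Finset.univ_nonempty_iff.mpr ⟨⟨0, hp⟩⟩)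
      (fun j => Real.sqrt ((B j).rank : ℝ)))
    (θstar : Fin p → ℝ)
    (ε : Fin n → Matrix (Fin d) (Fin d) ℝ) (hεsymm : ∀ i, (ε i)ᵀ = ε i)
    (Z : Fin n → Matrix (Fin d) (Fin d) ℝ) (hZ : ∀ i, Z i = Gamma B θstar + ε i)
    (lam : ℝ) (hlam : 0 < lam)
    (θhat : Fin p → ℝ) (hθhat : ∀ θ, objective B Z lam θhat ≤ objective B Z lam θ)
    (hevent : (1 / n : ℝ) * specNorm (∑ i, ε i) ≤ lam / (M₁ * u * n)) :
    frobNorm (Gamma B θhat - Gamma B θstar) ^ 2 ≤ 4 * lam * (∑ j, |θstar j|) / n :=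
  stmt_7_general hp hn M₁ B hBsymm hBF u hu θstar ε Z hZ lam hlam θhat hθhat hevent
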